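/- arXiv:1811.07449 — 3 statements merged into one kernel-verified Lean document; each statement's English description precedes it below -/
import Mathlib

section
/- For every integer m ≥ 3, n_p({2,m};3) = m+1, and every planar ({2,m};3)-graph on m+1 vertices is isomorphic either to the pinwheel P_m, or, when m is even, to the windmill T_{m/2}; these are the only planar ({2,m};3)-cages. -/
open SimpleGraph

/-- `H` is a minor of `G`: there is an assignment of pairwise disjoint connected
branch sets in `G` to the vertices of `H`, with an edge of `G` between the branch
sets of any two adjacent vertices of `H`. -/
def SimpleGraph.IsMinorOf {W V : Type*} (H : SimpleGraph W) (G : SimpleGraph V) : Prop :=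
  ∃ f : W → Set V,
    (∀ w, (G.induce (f w)).Connected) ∧
    (Pairwise fun w₁ w₂ => Disjoint (f w₁) (f w₂)) ∧
    ∀ ⦃w₁ w₂⦄, H.Adj w₁ w₂ → ∃ v₁ ∈ f w₁, ∃ v₂ ∈ f w₂, G.Adj v₁ v₂

/-- A graph is planar iff it has no `K₅` minor and no `K₃,₃` minor (Wagner's theorem). -/
def SimpleGraph.IsPlanar {V : Type*} (G : SimpleGraph V) : Prop :=
  ¬ (completeGraph (Fin 5)).IsMinorOf G ∧
    ¬ (completeBipartiteGraph (Fin 3) (Fin 3)).IsMinorOf G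

/-- A graph is outerplanar iff it has no `K₄` minor and no `K₂,₃` minor. -/
def SimpleGraph.IsOuterplanar {V : Type*} (G : SimpleGraph V) : Prop :=
  ¬ (completeGraph (Fin 4)).IsMinorOf G ∧
    ¬ (completeBipartiteGraph (Fin 2) (Fin 3)).IsMinorOf G

/-- The degree of a vertex, as the cardinality of its neighbour set. -/
noncomputable def SimpleGraph.degN {V : Type*} (G : SimpleGraph V) (v : V) : ℕ :=
  (G.neighborSet v).ncard

/-- An `({r,m};g)`-graph: girth `g`, every vertex has degree `r` or `m`, both occur. -/
def IsBigirthGraph {V : Type*} (G : SimpleGraph V) (r m g : ℕ) : Prop :=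
  G.girth = g ∧ (∀ v, G.degN v = r ∨ G.degN v = m) ∧
    (∃ v, G.degN v = r) ∧ (∃ v, G.degN v = m)

/-- The set of orders of finite planar `({r,m};g)`-graphs. -/
def bicageOrders (r m g : ℕ) : Set ℕ :=
  {n | ∃ (V : Type) (_ : Fintype V) (G : SimpleGraph V),
    G.IsPlanar ∧ IsBigirthGraph G r m g ∧ Fintype.card V = n}

/-- The pinwheel `P_m`: `m−1` triangles sharing the common edge `{0,1}`;
vertices `0` and `1` have degree `m`, other vertices have degree `2`. -/
def pinwheel (m : ℕ) : SimpleGraph (Fin (m + 1)) :=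
  SimpleGraph.fromRel (fun a _ => a.val = 0 ∨ a.val = 1)

/-- The windmill `T_l`: `l` triangles sharing the common vertex `0`;
vertex `0` has degree `2l`, other vertices have degree `2`. -/
def windmill (l : ℕ) : SimpleGraph (Fin (2 * l + 1)) :=
  SimpleGraph.fromRel (fun a b => a.val = 0 ∨ (a.val % 2 = 1 ∧ b.val = a.val + 1))

/-!
A vertex of degree `m` in a graph on `m + 1` vertices is adjacent to all others, and a vertex
of degree `2` sees every such universal vertex, so there are at most two of them. With two
universal vertices every other vertex has exactly those two neighbours: the pinwheel. With one
universal vertex `v`, every other vertex has exactly one neighbour besides `v`, so the graph is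
determined by a fixed-point-free involution of the remaining `m` vertices; hence `m` is even, and
any two such involutions have the same cycle type, so they are conjugate, which yields an
isomorphism with the windmill. Conversely the pinwheel has a triangle and all of its edges meet
two vertices; since the vertex cover number cannot grow under taking minors, while `K₅` and
`K₃,₃` need at least three vertices to cover their edges, it is planar.
-/

namespace SimpleGraph

variable {V W : Type*} {G : SimpleGraph V}

theorem girth_eq_three_of_adj {a b c : V} (hab : G.Adj a b) (hbc : G.Adj b c)
    (hca : G.Adj c a) : G.girth = 3 := by
  have hcycle : (Walk.cons hab (Walk.cons hbc (Walk.cons hca Walk.nil))).IsCycle := by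
    simp [Walk.isCycle_def, hab.ne, hbc.ne, hca.ne, hab.ne', hca.ne', Sym2.eq,
      Sym2.rel_iff']
  exact le_antisymm (girth_le_length hcycle) (three_le_girth fun h => h _ hcycle)

theorem IsMinorOf.vertexCoverNum_le {H : SimpleGraph W} (h : H.IsMinorOf G) :
    H.vertexCoverNum ≤ G.vertexCoverNum := by
  obtain ⟨f, -, hdisj, hadj⟩ := h
  cases isEmpty_or_nonempty V
  · rw [vertexCoverNum_eq_zero.mpr (eq_bot_iff_forall_not_adj.mpr fun a b hab =>
      isEmptyElim (hadj hab).choose)]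
    exact zero_le
  obtain ⟨c, hc, hcover⟩ := G.vertexCoverNum_exists
  set t := {w | (f w ∩ c).Nonempty}
  have ht : H.IsVertexCover t := by
    intro a b hab
    obtain ⟨x, hx, y, hy, hxy⟩ := hadj hab
    exact (hcover hxy).imp (fun hxc => ⟨x, hx, hxc⟩) (fun hyc => ⟨y, hy, hyc⟩)
  choose! g hg using fun w (hw : w ∈ t) => hw
  calc H.vertexCoverNum ≤ t.encard := ht.vertexCoverNum_le
    _ ≤ c.encard := by
      refine Set.encard_le_encard_of_injOn (fun w hw => (hg w hw).2) fun w₁ h₁ w₂ h₂ he => ?_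
      by_contra hne
      exact Set.disjoint_left.mp (hdisj hne) (hg w₁ h₁).1 (he ▸ (hg w₂ h₂).1)
    _ = G.vertexCoverNum := hc

theorem min_card_le_vertexCoverNum_completeBipartiteGraph (α β : Type*) :
    min (ENat.card α) (ENat.card β) ≤ (completeBipartiteGraph α β).vertexCoverNum := by
  obtain ⟨c, hc, hcover⟩ := (completeBipartiteGraph α β).vertexCoverNum_exists
  rw [← hc]
  by_cases hα : ∀ a, Sum.inl a ∈ c
  · refine min_le_of_left_le ?_
    rw [← Set.encard_univ]
    exact Set.encard_le_encard_of_injOn (fun a _ => hα a) Sum.inl_injective.injOn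
  · push Not at hα
    obtain ⟨a, ha⟩ := hα
    have hβ : ∀ b, Sum.inr b ∈ c := fun b =>
      (hcover (show (completeBipartiteGraph α β).Adj (.inl a) (.inr b) by simp)).resolve_left ha
    refine min_le_of_right_le ?_
    rw [← Set.encard_univ]
    exact Set.encard_le_encard_of_injOn (fun b _ => hβ b) Sum.inr_injective.injOn

theorem isPlanar_of_vertexCoverNum_le_two (h : G.vertexCoverNum ≤ 2) : G.IsPlanar := by
  constructor
  · intro hK
    have := hK.vertexCoverNum_le.trans h
    norm_num at this
  · intro hK
    have := (min_card_le_vertexCoverNum_completeBipartiteGraph _ _).trans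
      (hK.vertexCoverNum_le.trans h)
    norm_num at this

theorem degN_lt_card [Finite V] (v : V) : G.degN v < Nat.card V :=
  Set.ncard_lt_card fun h => G.irrefl (h.symm ▸ Set.mem_univ v : v ∈ G.neighborSet v)

theorem adj_of_degN_add_one_eq_card [Finite V] {v : V} (h : G.degN v + 1 = Nat.card V)
    {u : V} (hu : u ≠ v) : G.Adj v u := by
  have hsub : G.neighborSet v ⊆ {v}ᶜ := fun y hy hyv => G.irrefl (hyv ▸ hy)
  have hcompl : ({v}ᶜ : Set V).ncard = Nat.card V - 1 := by
    rw [Set.ncard_compl, Set.ncard_singleton]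
  have hN := Set.eq_of_subset_of_ncard_le hsub (by rw [hcompl, degN] at *; omega)
  exact (Set.ext_iff.mp hN u).mpr hu

theorem three_le_degN_of_adj [Finite V] {x a b c : V} (ha : G.Adj x a) (hb : G.Adj x b)
    (hc : G.Adj x c) (hab : a ≠ b) (hac : a ≠ c) (hbc : b ≠ c) : 3 ≤ G.degN x := by
  have hsub : ({a, b, c} : Set V) ⊆ G.neighborSet x := by
    rintro y (rfl | rfl | rfl) <;> assumption
  calc 3 = ({a, b, c} : Set V).ncard := by
        rw [Set.ncard_insert_of_notMem (by simp [hab, hac]), Set.ncard_pair hbc]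
    _ ≤ G.degN x := Set.ncard_le_ncard hsub

theorem eq_fromRel_of_two_universal [Finite V] {v w : V} (hvw : v ≠ w)
    (hv : ∀ u ≠ v, G.Adj v u) (hw : ∀ u ≠ w, G.Adj w u)
    (hdeg : ∀ u, u ≠ v → u ≠ w → G.degN u = 2) : G = fromRel fun a _ => a = v ∨ a = w := by
  ext a b
  rw [fromRel_adj]
  constructor
  · intro hab
    refine ⟨hab.ne, ?_⟩
    by_contra! h
    have hsub : ({v, w} : Set V) ⊆ G.neighborSet a := by
      rintro y (rfl | rfl)
      exacts [(hv a h.1.1).symm, (hw a h.1.2).symm]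
    have hN := Set.eq_of_subset_of_ncard_le hsub
      (by rw [Set.ncard_pair hvw, ← degN, hdeg a h.1.1 h.1.2])
    have hb : b ∈ ({v, w} : Set V) := hN ▸ hab
    rcases hb with rfl | rfl
    exacts [h.2.1 rfl, h.2.2 rfl]
  · rintro ⟨hne, (rfl | rfl) | (rfl | rfl)⟩
    exacts [hv b hne.symm, hw b hne.symm, (hv a hne).symm, (hw a hne).symm]

theorem exists_involutive_eq_fromRel_of_universal [Finite V] {v : V}
    (hv : ∀ u ≠ v, G.Adj v u) (hdeg : ∀ u ≠ v, G.degN u = 2) :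
    ∃ σ : V → V, Function.Involutive σ ∧ (∀ a, σ a = a ↔ a = v) ∧
      G = fromRel fun a b => a = v ∨ σ a = b := by
  classical
  have hpartner : ∀ u ≠ v, ∃ x, G.neighborSet u \ {v} = {x} := fun u hu =>
    Set.ncard_eq_one.mp (by
      rw [Set.ncard_sdiff_singleton_of_mem (show v ∈ G.neighborSet u from (hv u hu).symm),
        ← degN, hdeg u hu])
  have : Nonempty V := ⟨v⟩
  choose! p hp using hpartner
  set σ : V → V := fun u => if u = v then v else p u
  have hσ : ∀ u ≠ v, ∀ x, G.Adj u x ∧ x ≠ v ↔ σ u = x := fun u hu x => by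
    rw [show σ u = p u from if_neg hu]
    exact (Set.ext_iff.mp (hp u hu) x).trans eq_comm
  have hσv : σ v = v := if_pos rfl
  have hinv : Function.Involutive σ := fun u => by
    by_cases hu : u = v
    · rw [hu, hσv, hσv]
    obtain ⟨hadj, hne⟩ := (hσ u hu _).mpr rfl
    exact (hσ _ hne u).mp ⟨hadj.symm, hu⟩
  refine ⟨σ, hinv, fun a => ⟨fun h => ?_, fun h => h ▸ hσv⟩, ?_⟩
  · by_contra ha
    exact G.irrefl ((hσ a ha a).mpr h).1
  ext a b
  rw [fromRel_adj]
  constructor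
  · intro hab
    refine ⟨hab.ne, ?_⟩
    by_cases ha : a = v
    · exact Or.inl (Or.inl ha)
    by_cases hb : b = v
    · exact Or.inr (Or.inl hb)
    exact Or.inl (Or.inr ((hσ a ha b).mp ⟨hab, hb⟩))
  · have hσ_adj : ∀ a b, a ≠ b → σ a = b → G.Adj a b := fun a b hne h => by
      by_cases ha : a = v
      · subst ha
        exact absurd (hσv ▸ h) hne
      exact ((hσ a ha b).mpr h).1
    rintro ⟨hne, (rfl | h) | (rfl | h)⟩
    exacts [hv b hne.symm, hσ_adj a b hne h, (hv a hne).symm, (hσ_adj b a hne.symm h).symm]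

theorem eq_fromRel_of_degN_eq_two_or_eq [Finite V] {m : ℕ} (hcard : Nat.card V = m + 1)
    (hm : m ≠ 2) (hdeg : ∀ u, G.degN u = 2 ∨ G.degN u = m) {x v : V} (hx : G.degN x = 2)
    (hv : G.degN v = m) :
    (∃ v w, v ≠ w ∧ G = fromRel fun a _ => a = v ∨ a = w) ∨
      ∃ v, ∃ σ : V → V, Function.Involutive σ ∧ (∀ a, σ a = a ↔ a = v) ∧
        G = fromRel fun a b => a = v ∨ σ a = b := by
  have huniv : ∀ u, G.degN u = m → ∀ y ≠ u, G.Adj u y := fun u hu _ =>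
    adj_of_degN_add_one_eq_card (by rw [hu, hcard])
  have hxu : ∀ u, G.degN u = m → G.Adj u x := fun u hu =>
    huniv u hu x fun h => hm (by rw [← hu, ← h, hx])
  by_cases hw : ∃ w ≠ v, G.degN w = m
  · obtain ⟨w, hwv, hw⟩ := hw
    refine Or.inl ⟨v, w, hwv.symm,
      eq_fromRel_of_two_universal hwv.symm (huniv v hv) (huniv w hw) fun u huv huw => ?_⟩
    refine (hdeg u).resolve_right fun hu => ?_
    have := three_le_degN_of_adj (hxu v hv).symm (hxu w hw).symm (hxu u hu).symm
      hwv.symm huv.symm huw.symm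
    omega
  · push Not at hw
    exact Or.inr ⟨v, exists_involutive_eq_fromRel_of_universal (huniv v hv)
      fun u hu => (hdeg u).resolve_right (hw u hu)⟩

end SimpleGraph

theorem Function.Involutive.toPerm_sq {α : Type*} {f : α → α} (hf : Function.Involutive f) :
    hf.toPerm f ^ 2 = 1 :=
  Equiv.ext fun a => hf a

open Finset

namespace Equiv.Perm

theorem card_support_eq_card_sub_one {α : Type*} [Fintype α] [DecidableEq α] {σ : Perm α}
    {v : α} (h : ∀ a, σ a = a ↔ a = v) : #σ.support = Fintype.card α - 1 := by
  rw [show σ.support = {v}ᶜ by ext a; simp [h], card_compl, card_singleton]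

theorem cycleType_eq_of_sq_eq_one {α : Type*} [Fintype α] [DecidableEq α] {σ τ : Perm α}
    (hσ : σ ^ 2 = 1) (hτ : τ ^ 2 = 1) (h : #σ.support = #τ.support) :
    σ.cycleType = τ.cycleType := by
  have key : ∀ π : Perm α, π ^ 2 = 1 → π.cycleType = .replicate (#π.support / 2) 2 := by
    intro π hπ
    have hsum := π.sum_cycleType
    rw [cycleType_of_pow_prime_eq_one hπ] at hsum ⊢
    rw [Multiset.sum_replicate, smul_eq_mul] at hsum
    rw [← hsum, Nat.mul_div_cancel _ two_pos]
  rw [key σ hσ, key τ hτ, h]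

theorem exists_equiv_conj_of_sq_eq_one {α β : Type*} [Fintype α] [Fintype β] [DecidableEq β]
    {σ : Perm α} {τ : Perm β} (hσ : σ ^ 2 = 1) (hτ : τ ^ 2 = 1)
    (hcard : Fintype.card α = Fintype.card β) {v : α} {w : β}
    (hv : ∀ a, σ a = a ↔ a = v) (hw : ∀ b, τ b = b ↔ b = w) :
    ∃ e : α ≃ β, e v = w ∧ ∀ a, e (σ a) = τ (e a) := by
  let e₀ := Fintype.equivOfCardEq hcard
  have hv₀ : ∀ b, e₀.permCongrHom σ b = b ↔ b = e₀ v := fun b => by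
    change e₀ (σ (e₀.symm b)) = b ↔ _
    rw [← e₀.eq_symm_apply, hv, e₀.symm_apply_eq]
  have hsq : e₀.permCongrHom σ ^ 2 = 1 := by
    rw [← map_pow, hσ, map_one]
  obtain ⟨c, hc⟩ := isConj_iff.mp <| isConj_of_cycleType_eq <| cycleType_eq_of_sq_eq_one hsq hτ
    (by rw [card_support_eq_card_sub_one hv₀, card_support_eq_card_sub_one hw])
  have he : ∀ a, (e₀.trans c) (σ a) = τ ((e₀.trans c) a) := fun a => by
    simp [← hc, permCongrHom]
  exact ⟨e₀.trans c, (hw _).mp (by rw [← he, (hv v).mpr rfl]), he⟩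

end Equiv.Perm

def SimpleGraph.fromRelIso {V W : Type*} (e : V ≃ W) {r : V → V → Prop} {s : W → W → Prop}
    (h : ∀ a b, s (e a) (e b) ↔ r a b) : fromRel r ≃g fromRel s :=
  ⟨e, by simp [h]⟩

theorem Fintype.exists_equiv_apply_eq_of_ne {α β : Type*} [Fintype α] [Fintype β] [DecidableEq β]
    (hcard : Fintype.card α = Fintype.card β) {a₁ a₂ : α} {b₁ b₂ : β} (ha : a₁ ≠ a₂)
    (hb : b₁ ≠ b₂) : ∃ e : α ≃ β, e a₁ = b₁ ∧ e a₂ = b₂ := by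
  let e₀ := Fintype.equivOfCardEq hcard
  let e₁ := e₀.trans (Equiv.swap (e₀ a₁) b₁)
  have h₁ : e₁ a₁ = b₁ := by simp [e₁]
  refine ⟨e₁.trans (Equiv.swap (e₁ a₂) b₂), ?_, by simp⟩
  rw [Equiv.trans_apply, h₁]
  exact Equiv.swap_apply_of_ne_of_ne (h₁ ▸ e₁.injective.ne ha) hb

section Pinwheel

variable {m : ℕ}

theorem pinwheel_adj {i j : Fin (m + 1)} :
    (pinwheel m).Adj i j ↔ i.val ≠ j.val ∧ (i.val ≤ 1 ∨ j.val ≤ 1) := by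
  rw [pinwheel, fromRel_adj, Ne, Fin.ext_iff]
  omega

theorem pinwheel_neighborSet_of_val_le_one {i : Fin (m + 1)} (hi : i.val ≤ 1) :
    (pinwheel m).neighborSet i = {i}ᶜ := by
  ext j
  simp only [mem_neighborSet, pinwheel_adj, Set.mem_compl_iff, Set.mem_singleton_iff, Fin.ext_iff]
  omega

theorem pinwheel_neighborSet_of_two_le_val {i : Fin (m + 1)} (hi : 2 ≤ i.val) :
    (pinwheel m).neighborSet i = {⟨0, by omega⟩, ⟨1, by omega⟩} := by
  ext j
  simp only [mem_neighborSet, pinwheel_adj, Set.mem_insert_iff, Set.mem_singleton_iff,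
    Fin.ext_iff]
  omega

theorem pinwheel_degN_of_val_le_one {i : Fin (m + 1)} (hi : i.val ≤ 1) :
    (pinwheel m).degN i = m := by
  rw [degN, pinwheel_neighborSet_of_val_le_one hi, Set.ncard_compl, Set.ncard_singleton]
  simp

theorem pinwheel_degN_of_two_le_val {i : Fin (m + 1)} (hi : 2 ≤ i.val) :
    (pinwheel m).degN i = 2 := by
  rw [degN, pinwheel_neighborSet_of_two_le_val hi, Set.ncard_pair (by simp)]

theorem pinwheel_girth (hm : 2 ≤ m) : (pinwheel m).girth = 3 :=
  girth_eq_three_of_adj (a := ⟨0, by omega⟩) (b := ⟨1, by omega⟩) (c := ⟨2, by omega⟩)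
    (pinwheel_adj.mpr (by simp)) (pinwheel_adj.mpr (by simp)) (pinwheel_adj.mpr (by simp))

theorem pinwheel_isPlanar (hm : 1 ≤ m) : (pinwheel m).IsPlanar := by
  refine isPlanar_of_vertexCoverNum_le_two ?_
  have hcover : (pinwheel m).IsVertexCover {⟨0, by omega⟩, ⟨1, by omega⟩} := by
    intro a b hab
    simp only [pinwheel_adj, Set.mem_insert_iff, Set.mem_singleton_iff, Fin.ext_iff] at hab ⊢
    omega
  exact hcover.vertexCoverNum_le.trans (Set.encard_pair (by simp)).le

theorem pinwheel_mem_bicageOrders (hm : 2 ≤ m) : m + 1 ∈ bicageOrders 2 m 3 := by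
  refine ⟨Fin (m + 1), inferInstance, pinwheel m, pinwheel_isPlanar (by omega),
    ⟨pinwheel_girth hm, fun i => ?_, ⟨⟨2, by omega⟩, pinwheel_degN_of_two_le_val le_rfl⟩,
      ⟨0, pinwheel_degN_of_val_le_one (Nat.zero_le 1)⟩⟩, Fintype.card_fin _⟩
  rcases le_or_gt i.val 1 with hi | hi
  · exact Or.inr (pinwheel_degN_of_val_le_one hi)
  · exact Or.inl (pinwheel_degN_of_two_le_val hi)

theorem nonempty_fromRel_iso_pinwheel {V : Type*} [Fintype V] (hm : 1 ≤ m)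
    (hcard : Fintype.card V = m + 1) {v w : V} (hvw : v ≠ w) :
    Nonempty ((fromRel fun a _ => a = v ∨ a = w) ≃g pinwheel m) := by
  obtain ⟨e, hv, hw⟩ := Fintype.exists_equiv_apply_eq_of_ne (β := Fin (m + 1))
    (by rw [hcard, Fintype.card_fin]) hvw (b₁ := ⟨0, by omega⟩) (b₂ := ⟨1, by omega⟩) (by simp)
  refine ⟨fromRelIso e fun a _ => ?_⟩
  rw [← e.injective.eq_iff, ← e.injective.eq_iff (b := w), hv, hw, Fin.ext_iff, Fin.ext_iff]

end Pinwheel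

section Windmill

variable {l : ℕ}

def windmillPartner (l : ℕ) (i : Fin (2 * l + 1)) : Fin (2 * l + 1) :=
  ⟨if i.val = 0 then 0 else if i.val % 2 = 1 then i.val + 1 else i.val - 1, by
    have := i.isLt
    split_ifs <;> omega⟩

theorem windmillPartner_involutive : Function.Involutive (windmillPartner l) := fun i => by
  ext
  simp only [windmillPartner]
  grind

theorem windmillPartner_eq_self_iff {i : Fin (2 * l + 1)} : windmillPartner l i = i ↔ i = 0 := by
  have := i.isLt
  simp only [windmillPartner, Fin.ext_iff, Fin.val_zero]
  split_ifs <;> omega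

theorem windmill_eq_fromRel : windmill l = fromRel fun a b => a = 0 ∨ windmillPartner l a = b := by
  ext a b
  have := a.isLt
  have := b.isLt
  simp only [windmill, windmillPartner, fromRel_adj, ne_eq, Fin.ext_iff, Fin.val_zero]
  split_ifs <;> omega

theorem exists_fromRel_iso_windmill {V : Type*} [Fintype V] {m : ℕ}
    (hcard : Fintype.card V = m + 1) {v : V} {σ : V → V} (hσ : Function.Involutive σ)
    (hfix : ∀ a, σ a = a ↔ a = v) :
    ∃ l, m = 2 * l ∧ Nonempty ((fromRel fun a b => a = v ∨ σ a = b) ≃g windmill l) := by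
  classical
  obtain ⟨l, rfl⟩ : 2 ∣ m := by
    have := Equiv.Perm.two_dvd_card_support hσ.toPerm_sq
    rwa [Equiv.Perm.card_support_eq_card_sub_one hfix, hcard, Nat.add_sub_cancel] at this
  obtain ⟨e, hev, he⟩ := Equiv.Perm.exists_equiv_conj_of_sq_eq_one hσ.toPerm_sq
    windmillPartner_involutive.toPerm_sq (by rw [hcard, Fintype.card_fin]) hfix
    (fun _ => windmillPartner_eq_self_iff)
  simp only [Function.Involutive.coe_toPerm] at he
  refine ⟨l, rfl, ?_⟩
  rw [windmill_eq_fromRel]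
  exact ⟨fromRelIso e fun a b => by rw [← hev, e.injective.eq_iff, ← he, e.injective.eq_iff]⟩

end Windmill

/-- For `m ≥ 3`, `n_p({2,m};3) = m+1`, and every planar `({2,m};3)`-graph
on `m+1` vertices is isomorphic to the pinwheel `P_m` or, when `m` is even, to the
windmill `T_{m/2}`; these are the only planar `({2,m};3)`-cages. -/
theorem planar_two_m_three_cages (m : ℕ) (hm : 3 ≤ m) :
    IsLeast (bicageOrders 2 m 3) (m + 1) ∧
    ∀ (V : Type) [Fintype V] (G : SimpleGraph V),
      G.IsPlanar → IsBigirthGraph G 2 m 3 → Fintype.card V = m + 1 →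
      Nonempty (G ≃g pinwheel m) ∨ ∃ l, m = 2 * l ∧ Nonempty (G ≃g windmill l) := by
  refine ⟨⟨pinwheel_mem_bicageOrders (by omega), ?_⟩, ?_⟩
  · rintro n ⟨V, _, G, -, ⟨-, -, -, v, hv⟩, rfl⟩
    have := G.degN_lt_card v
    rw [Nat.card_eq_fintype_card, hv] at this
    omega
  · rintro V _ G - ⟨-, hdeg, ⟨x, hx⟩, ⟨v, hv⟩⟩ hcard
    rcases G.eq_fromRel_of_degN_eq_two_or_eq (by rw [Nat.card_eq_fintype_card, hcard])
      (by omega) hdeg hx hv with ⟨v, w, hvw, rfl⟩ | ⟨v, σ, hσ, hfix, rfl⟩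
    · exact Or.inl (nonempty_fromRel_iso_pinwheel (by omega) hcard hvw)
    · exact Or.inr (exists_fromRel_iso_windmill hcard hσ hfix)
end

section
/- Let m ≥ 3 and let G be a finite planar simple graph on m+1 vertices having at least one vertex of degree m. If G has at least three vertices of degree m, then either m = 3 and G has exactly four vertices of degree 3, or m = 4 and G has exactly three vertices of degree 4. In particular, if m ≥ 5 then G has at most two vertices of degree m. -/
open SimpleGraph

/-!
A vertex of degree `m` in a graph on `m + 1` vertices is universal. Three universal vertices
together with three further vertices span a `K₃,₃`, and four universal vertices with a fifth
vertex span a `K₅`; so planarity with three universal vertices forces `m ≤ 4`, and for `m = 4`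
there are at most three. For `m = 3`, the fourth vertex is adjacent to the three universal ones,
hence universal itself.
-/

theorem Set.exists_injective_fin_of_le_ncard {V : Type*} {S : Set V} {n : ℕ}
    (hS : S.Finite) (h : n ≤ S.ncard) :
    ∃ f : Fin n → V, Function.Injective f ∧ ∀ i, f i ∈ S := by
  obtain ⟨T, hTS, hT⟩ := Set.exists_subset_card_eq h
  have := (hS.subset hTS).to_subtype
  let e : Fin n ≃ T := (Finite.equivFinOfCardEq hT).symm
  exact ⟨Subtype.val ∘ e, Subtype.val_injective.comp e.injective, fun i => hTS (e i).2⟩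

theorem Set.exists_injective_sumElim_of_le_ncard {V : Type*} [Finite V] {S : Set V} {n k : ℕ}
    (hn : n ≤ S.ncard) (hk : n + k ≤ Nat.card V) :
    ∃ f : Fin n ⊕ Fin k → V, Function.Injective f ∧ ∀ i, f (Sum.inl i) ∈ S := by
  obtain ⟨f, hf, hfS⟩ := Set.exists_injective_fin_of_le_ncard S.toFinite hn
  have hcompl : k ≤ (Set.range f)ᶜ.ncard := by
    rw [Set.ncard_compl, Set.ncard_range_of_injective hf, Nat.card_fin]
    omega
  obtain ⟨g, hg, hgf⟩ := Set.exists_injective_fin_of_le_ncard (Set.toFinite _) hcompl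
  exact ⟨Sum.elim f g, hf.sumElim hg fun i j h => hgf j ⟨i, h⟩, hfS⟩

namespace SimpleGraph

variable {V W : Type*} {G : SimpleGraph V} {H : SimpleGraph W}

theorem degN_eq_card_sub_one_iff [Fintype V] {v : V} :
    G.degN v = Fintype.card V - 1 ↔ G.IsUniversal v := by
  classical
  rw [degN, ← Nat.card_coe_set_eq, Nat.card_eq_fintype_card, card_neighborSet_eq_degree,
    degree_eq_card_sub_one]

theorem isMinorOf_of_injective (f : W → V) (hf : Function.Injective f)
    (hadj : ∀ ⦃w₁ w₂⦄, H.Adj w₁ w₂ → G.IsUniversal (f w₁) ∨ G.IsUniversal (f w₂)) :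
    H.IsMinorOf G := by
  refine ⟨fun w => {f w}, fun w => ?_, fun w₁ w₂ h => ?_, fun w₁ w₂ h => ?_⟩
  · have : Nonempty ({f w} : Set V) := ⟨⟨f w, rfl⟩⟩
    exact ⟨fun x y => Subtype.ext (x.2.trans y.2.symm) ▸ Reachable.refl x⟩
  · simpa [Set.disjoint_singleton] using hf.ne h
  · have hne : f w₁ ≠ f w₂ := hf.ne (H.ne_of_adj h)
    refine ⟨f w₁, rfl, f w₂, rfl, ?_⟩
    rcases hadj h with h₁ | h₂
    exacts [h₁ hne, (h₂ hne.symm).symm]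

variable [Finite V]

theorem completeBipartiteGraph_isMinorOf {n k : ℕ} (hn : n ≤ G.universalVerts.ncard)
    (hk : n + k ≤ Nat.card V) : (completeBipartiteGraph (Fin n) (Fin k)).IsMinorOf G := by
  obtain ⟨f, hf, hfU⟩ := Set.exists_injective_sumElim_of_le_ncard hn hk
  refine isMinorOf_of_injective f hf ?_
  rintro (i | i) (j | j) h
  · simp at h
  · exact .inl (hfU i)
  · exact .inr (hfU j)
  · simp at h

theorem completeGraph_isMinorOf {n : ℕ} (hn : n ≤ G.universalVerts.ncard)
    (hV : n + 1 ≤ Nat.card V) : (completeGraph (Fin (n + 1))).IsMinorOf G := by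
  obtain ⟨f, hf, hfU⟩ := Set.exists_injective_sumElim_of_le_ncard hn hV
  refine isMinorOf_of_injective (f ∘ finSumFinEquiv.symm)
    (hf.comp finSumFinEquiv.symm.injective) ?_
  intro p q hpq
  rcases hp : finSumFinEquiv.symm p with i | i
  · exact .inl (by rw [Function.comp_apply, hp]; exact hfU i)
  rcases hq : finSumFinEquiv.symm q with j | j
  · exact .inr (by rw [Function.comp_apply, hq]; exact hfU j)
  rw [Subsingleton.elim i j, ← hq] at hp
  exact absurd (finSumFinEquiv.symm.injective hp) hpq

theorem universalVerts_eq_univ_of_card_le (h : Nat.card V ≤ G.universalVerts.ncard + 1) :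
    G.universalVerts = Set.univ := by
  refine Set.eq_univ_of_forall fun v => ?_
  by_cases hv : v ∈ G.universalVerts
  · exact hv
  have hU : G.universalVerts = {v}ᶜ := by
    refine Set.eq_of_subset_of_ncard_le (fun u hu huv => hv (huv ▸ hu)) ?_
    rw [Set.ncard_compl, Set.ncard_singleton]
    omega
  exact fun w hvw => ((hU.symm ▸ hvw.symm : w ∈ G.universalVerts) hvw.symm).symm

theorem IsPlanar.card_le_five (hG : G.IsPlanar) (h : 3 ≤ G.universalVerts.ncard) :
    Nat.card V ≤ 5 := by
  by_contra! hV
  exact hG.2 (completeBipartiteGraph_isMinorOf h (by omega))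

theorem IsPlanar.ncard_universalVerts_le_three (hG : G.IsPlanar) (hV : 5 ≤ Nat.card V) :
    G.universalVerts.ncard ≤ 3 := by
  by_contra! h
  exact hG.1 (completeGraph_isMinorOf (n := 4) (by omega) hV)

end SimpleGraph

theorem planar_order_succ_max_degree_count_general {V : Type} [Fintype V] (G : SimpleGraph V)
    (m : ℕ) (hm : 3 ≤ m) (hcard : Fintype.card V = m + 1)
    (hpl : G.IsPlanar) :
    (3 ≤ {v | G.degN v = m}.ncard →
      (m = 3 ∧ {v | G.degN v = m}.ncard = 4) ∨
        (m = 4 ∧ {v | G.degN v = m}.ncard = 3)) ∧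
    (5 ≤ m → {v | G.degN v = m}.ncard ≤ 2) := by
  have hV : Nat.card V = m + 1 := Nat.card_eq_fintype_card.trans hcard
  have hS : {v | G.degN v = m} = G.universalVerts := by
    ext v
    rw [Set.mem_ofPred_eq, show m = Fintype.card V - 1 by omega]
    exact G.degN_eq_card_sub_one_iff
  rw [hS]
  refine ⟨fun h3 => ?_, fun h5 => ?_⟩
  · have := hpl.card_le_five h3
    obtain rfl | rfl : m = 3 ∨ m = 4 := by omega
    · refine .inl ⟨rfl, ?_⟩
      rw [G.universalVerts_eq_univ_of_card_le (by omega), Set.ncard_univ, hV]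
    · exact .inr ⟨rfl, le_antisymm (hpl.ncard_universalVerts_le_three (by omega)) h3⟩
  · by_contra! h
    have := hpl.card_le_five (by omega)
    omega

/-- Let `m ≥ 3` and let `G` be a finite planar graph on `m+1` vertices
with at least one vertex of degree `m`. If `G` has at least three vertices of degree
`m`, then either `m = 3` and `G` has exactly four vertices of degree `3`, or `m = 4`
and `G` has exactly three vertices of degree `4`. In particular, if `m ≥ 5` then `G`
has at most two vertices of degree `m`. -/
theorem planar_order_succ_max_degree_count {V : Type} [Fintype V] (G : SimpleGraph V)
    (m : ℕ) (hm : 3 ≤ m) (hcard : Fintype.card V = m + 1)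
    (hpl : G.IsPlanar) (hex : ∃ v, G.degN v = m) :
    (3 ≤ {v | G.degN v = m}.ncard →
      (m = 3 ∧ {v | G.degN v = m}.ncard = 4) ∨
        (m = 4 ∧ {v | G.degN v = m}.ncard = 3)) ∧
    (5 ≤ m → {v | G.degN v = m}.ncard ≤ 2) :=
  planar_order_succ_max_degree_count_general G m hm hcard hpl
end

section
/- Every finite outerplanar simple graph with at least 4 vertices in which every vertex has degree at least 2 contains two non-adjacent vertices each of degree exactly 2. -/
open SimpleGraph

/-!
We prove by induction on the number of vertices that every graph with no `K₄` minor and at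
least four vertices has two non-adjacent vertices of degree at most `2`; deleting vertices and
contracting edges keeps a graph `K₄`-minor-free.

Let `x` be a vertex of degree at most `2`. If its neighbours are pairwise adjacent, delete `x`:
the two vertices found in `G - x` cannot both be neighbours of `x`, and one that is not pairs
with `x`. If `x` has two non-adjacent neighbours `a, b`, suppress `x` by contracting `xa`: this
replaces the path `a x b` by the edge `ab` and changes no degree.

If all degrees are at least `3`, contracting an edge `pq` lowers, by one, only the degrees of
the common neighbours of `p` and `q`, all of which stay adjacent to the merged vertex; so the
induction hypothesis gives two non-adjacent common neighbours, one of degree `3`. At such a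
vertex `w`, with `N(w) = {p, q, t}`, the edge `wp` forces `N(w) \ {p} = {q, t}` with `q, t`
non-adjacent, while the edge `wq` forces `t` adjacent to `q`.
On four vertices, minimum degree `3` means `G = K₄`.
-/

namespace SimpleGraph

variable {V W U : Type*} {G : SimpleGraph V} {H : SimpleGraph W} {x a b : V}

lemma induce_singleton_connected (G : SimpleGraph V) (v : V) : (G.induce {v}).Connected :=
  ⟨Preconnected.of_subsingleton⟩

lemma induce_biUnion_connected {s : Set W} (hs : (H.induce s).Connected) {f : W → Set V}
    (hf : ∀ w ∈ s, (G.induce (f w)).Connected)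
    (hadj : ∀ w₁ ∈ s, ∀ w₂ ∈ s, H.Adj w₁ w₂ → ∃ v₁ ∈ f w₁, ∃ v₂ ∈ f w₂, G.Adj v₁ v₂) :
    (G.induce (⋃ w ∈ s, f w)).Connected := by
  have hsub : ∀ w ∈ s, f w ⊆ ⋃ w ∈ s, f w := fun w hw => Set.subset_biUnion_of_mem hw
  have hinside : ∀ w (hw : w ∈ s) {a b} (ha : a ∈ f w) (hb : b ∈ f w),
      (G.induce (⋃ w ∈ s, f w)).Reachable ⟨a, hsub w hw ha⟩ ⟨b, hsub w hw hb⟩ :=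
    fun w hw a b ha hb =>
      ((hf w hw).preconnected ⟨a, ha⟩ ⟨b, hb⟩).map (G.induceHomOfLE (hsub w hw)).toHom
  obtain ⟨w₀, hw₀⟩ := hs.nonempty
  obtain ⟨a₀, ha₀⟩ := (hf w₀ hw₀).nonempty
  have key : ∀ w : s, (H.induce s).Reachable ⟨w₀, hw₀⟩ w → ∀ b (hb : b ∈ f w),
      (G.induce (⋃ w ∈ s, f w)).Reachable ⟨a₀, hsub w₀ hw₀ ha₀⟩ ⟨b, hsub w w.2 hb⟩ := by
    intro w hw
    rw [reachable_iff_reflTransGen] at hw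
    induction hw with
    | refl => exact fun b hb => hinside w₀ hw₀ ha₀ hb
    | @tail w₁ w₂ _ hw₁w₂ ih =>
      intro b hb
      obtain ⟨v₁, hv₁, v₂, hv₂, hv₁v₂⟩ := hadj _ w₁.2 _ w₂.2 hw₁w₂
      have hstep : (G.induce (⋃ w ∈ s, f w)).Adj ⟨v₁, hsub w₁ w₁.2 hv₁⟩ ⟨v₂, hsub w₂ w₂.2 hv₂⟩ :=
        hv₁v₂
      exact (ih v₁ hv₁).trans (hstep.reachable.trans (hinside w₂ w₂.2 hv₂ hb))
  rw [connected_iff_exists_forall_reachable]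
  refine ⟨⟨a₀, hsub w₀ hw₀ ha₀⟩, fun ⟨b, hb⟩ => ?_⟩
  obtain ⟨w, hw, hbw⟩ := Set.mem_iUnion₂.mp hb
  exact key ⟨w, hw⟩ (hs.preconnected _ _) b hbw

theorem IsMinorOf.trans {K : SimpleGraph U} (hKH : K.IsMinorOf H) (hHG : H.IsMinorOf G) :
    K.IsMinorOf G := by
  obtain ⟨g, hg_conn, hg_disj, hg_adj⟩ := hKH
  obtain ⟨f, hf_conn, hf_disj, hf_adj⟩ := hHG
  refine ⟨fun u => ⋃ w ∈ g u, f w,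
    fun u => induce_biUnion_connected (hg_conn u) (fun w _ => hf_conn w)
      (fun _ _ _ _ h => hf_adj h), fun _ _ hu => ?_, fun _ _ hu => ?_⟩
  · simp only [Set.disjoint_iUnion_left, Set.disjoint_iUnion_right]
    exact fun w₂ hw₂ w₁ hw₁ =>
      hf_disj fun h => Set.disjoint_left.mp (hg_disj hu) hw₁ (h ▸ hw₂)
  · obtain ⟨w₁, hw₁, w₂, hw₂, hw⟩ := hg_adj hu
    obtain ⟨v₁, hv₁, v₂, hv₂, hv⟩ := hf_adj hw
    exact ⟨v₁, Set.mem_biUnion hw₁ hv₁, v₂, Set.mem_biUnion hw₂ hv₂, hv⟩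

theorem Hom.isMinorOf_of_injective (φ : H →g G) (hφ : Function.Injective φ) : H.IsMinorOf G :=
  ⟨fun w => {φ w}, fun _ => induce_singleton_connected G _,
    fun _ _ h => Set.disjoint_singleton.mpr (hφ.ne h), fun _ _ h => ⟨_, rfl, _, rfl, φ.map_rel h⟩⟩

theorem induce_isMinorOf (G : SimpleGraph V) (s : Set V) : (G.induce s).IsMinorOf G :=
  (Embedding.induce s).toHom.isMinorOf_of_injective Subtype.val_injective

/-- Contraction of the edge `xa`: `x` is deleted and its neighbours are joined to `a`. -/
def contractEdge (G : SimpleGraph V) (x a : V) : SimpleGraph ({x}ᶜ : Set V) :=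
  fromRel fun u v => G.Adj u v ∨ (u.1 = a ∧ G.Adj x v)

lemma contractEdge_adj {u v : ({x}ᶜ : Set V)} :
    (G.contractEdge x a).Adj u v ↔
      u ≠ v ∧ (G.Adj u v ∨ u.1 = a ∧ G.Adj x v ∨ v.1 = a ∧ G.Adj x u) := by
  simp only [contractEdge, fromRel_adj, G.adj_comm v.1 u.1]
  tauto

lemma contractEdge_adj_of_adj {u v : ({x}ᶜ : Set V)} (h : G.Adj u v) :
    (G.contractEdge x a).Adj u v :=
  contractEdge_adj.mpr ⟨fun huv => G.ne_of_adj h (congrArg _ huv), Or.inl h⟩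

theorem contractEdge_isMinorOf (hxa : G.Adj x a) : (G.contractEdge x a).IsMinorOf G := by
  classical
  let f : ({x}ᶜ : Set V) → Set V := fun w => if w.1 = a then {a, x} else {w.1}
  have hmem : ∀ w, w.1 ∈ f w := fun w => by
    by_cases hw : w.1 = a <;> simp [f, hw]
  have hx : ∀ w, w.1 = a → x ∈ f w := fun w hw => by simp [f, hw]
  refine ⟨f, fun w => ?_, fun w₁ w₂ hne => ?_, fun w₁ w₂ h => ?_⟩
  · by_cases hw : w.1 = a
    · rw [show f w = {a, x} from if_pos hw]
      exact induce_pair_connected_of_adj hxa.symm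
    · rw [show f w = {w.1} from if_neg hw]
      exact induce_singleton_connected G w.1
  · have hne' : w₁.1 ≠ w₂.1 := Subtype.coe_ne_coe.mpr hne
    have h₁ : w₁.1 ≠ x := w₁.2
    have h₂ : w₂.1 ≠ x := w₂.2
    by_cases e₁ : w₁.1 = a <;> by_cases e₂ : w₂.1 = a <;> simp_all [f]
  · rcases contractEdge_adj.mp h with ⟨-, h | ⟨hw, h⟩ | ⟨hw, h⟩⟩
    · exact ⟨_, hmem w₁, _, hmem w₂, h⟩
    · exact ⟨x, hx w₁ hw, _, hmem w₂, h⟩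
    · exact ⟨_, hmem w₁, x, hx w₂ hw, h.symm⟩

lemma degN_eq_ncard_image_val {s : Set V} (G' : SimpleGraph s) (w : s) :
    G'.degN w = (Subtype.val '' G'.neighborSet w).ncard :=
  (Set.ncard_image_of_injective _ Subtype.val_injective).symm

lemma degN_induce_of_neighborSet_subset {s : Set V} (w : s) (h : G.neighborSet w ⊆ s) :
    (G.induce s).degN w = G.degN w := by
  rw [degN_eq_ncard_image_val, degN]
  congr 1
  ext v
  exact ⟨fun ⟨_, hv', hv⟩ => hv ▸ hv', fun hv => ⟨⟨v, h hv⟩, hv, rfl⟩⟩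

lemma mem_image_val_neighborSet_contractEdge {w : ({x}ᶜ : Set V)} {v : V} :
    v ∈ Subtype.val '' (G.contractEdge x a).neighborSet w ↔
      v ≠ x ∧ v ≠ w ∧ (G.Adj w v ∨ w.1 = a ∧ G.Adj x v ∨ v = a ∧ G.Adj x w) := by
  constructor
  · rintro ⟨v, hv, rfl⟩
    obtain ⟨hne, h⟩ := contractEdge_adj.mp hv
    exact ⟨v.2, fun h => hne (Subtype.ext h.symm), h⟩
  · rintro ⟨hvx, hvw, h⟩
    exact ⟨⟨v, hvx⟩, contractEdge_adj.mpr ⟨fun h => hvw (congrArg Subtype.val h).symm, h⟩, rfl⟩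

lemma image_val_neighborSet_contractEdge_of_adj (hax : a ≠ x) {w : ({x}ᶜ : Set V)}
    (hwa : w.1 ≠ a) (hwx : G.Adj w x) :
    Subtype.val '' (G.contractEdge x a).neighborSet w = insert a (G.neighborSet w \ {x}) := by
  ext v
  rw [mem_image_val_neighborSet_contractEdge]
  simp only [Set.mem_insert_iff, Set.mem_sdiff, mem_neighborSet, Set.mem_singleton_iff]
  have hvw : G.Adj w v → v ≠ w := fun h => (G.ne_of_adj h).symm
  grind [G.adj_comm]

section Finite

variable [Finite V]

lemma degN_contractEdge_of_notMem_commonNeighbors (hax : a ≠ x) {w : ({x}ᶜ : Set V)}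
    (hwa : w.1 ≠ a) (hw : w.1 ∉ G.commonNeighbors x a) :
    (G.contractEdge x a).degN w = G.degN w := by
  rw [degN_eq_ncard_image_val]
  by_cases hwx : G.Adj w x
  · have hwa' : ¬ G.Adj w a := fun h => hw ⟨hwx.symm, h.symm⟩
    rw [image_val_neighborSet_contractEdge_of_adj hax hwa hwx,
      Set.ncard_insert_of_notMem fun h => hwa' h.1,
      Set.ncard_sdiff_singleton_add_one (show x ∈ G.neighborSet w from hwx), degN]
  · rw [degN]
    congr 1
    ext v
    rw [mem_image_val_neighborSet_contractEdge]
    have hvw : G.Adj w v → v ≠ w := fun h => (G.ne_of_adj h).symm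
    grind [G.adj_comm, mem_neighborSet]

lemma degN_contractEdge_add_one_of_mem_commonNeighbors (hax : a ≠ x) {w : ({x}ᶜ : Set V)}
    (hw : w.1 ∈ G.commonNeighbors x a) : (G.contractEdge x a).degN w + 1 = G.degN w := by
  obtain ⟨hxw, haw⟩ := hw
  rw [degN_eq_ncard_image_val,
    image_val_neighborSet_contractEdge_of_adj hax (G.ne_of_adj haw).symm hxw.symm,
    Set.insert_eq_of_mem (show a ∈ G.neighborSet w \ {x} from ⟨haw.symm, hax⟩),
    Set.ncard_sdiff_singleton_add_one (show x ∈ G.neighborSet w from hxw.symm), degN]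

lemma degN_contractEdge_of_neighborSet_eq_pair (hNx : G.neighborSet x = {a, b})
    (hab : a ≠ b) (hnab : ¬ G.Adj a b) (w : ({x}ᶜ : Set V)) :
    (G.contractEdge x a).degN w = G.degN w := by
  have hxv : ∀ {v}, G.Adj x v ↔ v = a ∨ v = b := by
    intro v; rw [← mem_neighborSet, hNx]; rfl
  have hax : a ≠ x := (G.ne_of_adj (hxv.mpr (Or.inl rfl))).symm
  by_cases hwa : w.1 = a
  · have himage : Subtype.val '' (G.contractEdge x a).neighborSet w =
        insert b (G.neighborSet a \ {x}) := by
      ext v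
      rw [mem_image_val_neighborSet_contractEdge, hwa, hxv]
      simp only [Set.mem_insert_iff, Set.mem_sdiff, mem_neighborSet, Set.mem_singleton_iff]
      have hbx : b ≠ x := (G.ne_of_adj (hxv.mpr (Or.inr rfl))).symm
      have hva : G.Adj a v → v ≠ a := fun h => (G.ne_of_adj h).symm
      grind
    rw [degN_eq_ncard_image_val, himage, Set.ncard_insert_of_notMem fun h => hnab h.1,
      Set.ncard_sdiff_singleton_add_one (show x ∈ G.neighborSet a from G.adj_symm
        (hxv.mpr (Or.inl rfl))), hwa, degN]
  · refine degN_contractEdge_of_notMem_commonNeighbors hax hwa fun ⟨hxw, haw⟩ => ?_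
    rcases hxv.mp hxw with h | h
    exacts [hwa h, hnab (h ▸ haw)]

lemma adj_of_card_sub_one_le_degN {u v : V} (hu : Nat.card V - 1 ≤ G.degN u)
    (huv : u ≠ v) : G.Adj u v := by
  have hsub : G.neighborSet u ⊆ {u}ᶜ := fun w hw hwu => G.irrefl (hwu ▸ hw)
  have hcard : ({u}ᶜ : Set V).ncard ≤ (G.neighborSet u).ncard := by
    rwa [Set.ncard_compl, Set.ncard_singleton]
  rw [← mem_neighborSet, Set.eq_of_subset_of_ncard_le hsub hcard]
  exact huv.symm

lemma completeGraph_fin_card_isMinorOf (h : ∀ v, Nat.card V - 1 ≤ G.degN v) :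
    (completeGraph (Fin (Nat.card V))).IsMinorOf G :=
  Hom.isMinorOf_of_injective
    ⟨(Finite.equivFin V).symm, fun hij => adj_of_card_sub_one_le_degN (h _)
      ((Finite.equivFin V).symm.injective.ne hij)⟩
    (Finite.equivFin V).symm.injective

lemma exists_neighborSet_eq_pair_of_not_isClique (hx : G.degN x ≤ 2)
    (h : ¬ G.IsClique (G.neighborSet x)) :
    ∃ a b, G.neighborSet x = {a, b} ∧ a ≠ b ∧ ¬ G.Adj a b := by
  obtain ⟨a, ha, b, hb, hab, hnab⟩ : ∃ a ∈ G.neighborSet x, ∃ b ∈ G.neighborSet x,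
      a ≠ b ∧ ¬ G.Adj a b := by
    simpa [IsClique, Set.Pairwise] using h
  refine ⟨a, b, (Set.eq_of_subset_of_ncard_le (Set.pair_subset ha hb) ?_).symm, hab, hnab⟩
  rwa [Set.ncard_pair hab]

end Finite

def HasNonadjPairDegLeTwo (G : SimpleGraph V) : Prop :=
  ∃ u v, u ≠ v ∧ ¬ G.Adj u v ∧ G.degN u ≤ 2 ∧ G.degN v ≤ 2

lemma HasNonadjPairDegLeTwo.of_card_eq_four [Finite V] (h4 : Nat.card V = 4)
    (hx : G.degN x ≤ 2) : G.HasNonadjPairDegLeTwo := by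
  obtain ⟨c, hc⟩ : (insert x (G.neighborSet x))ᶜ.Nonempty := by
    refine Set.nonempty_of_ncard_ne_zero ?_
    have := Set.ncard_insert_le x (G.neighborSet x)
    rw [Set.ncard_compl, h4]
    rw [degN] at hx
    omega
  have hcx : c ≠ x := fun h => hc (Or.inl h)
  have hxc : ¬ G.Adj x c := fun h => hc (Or.inr h)
  have hc_deg : G.degN c ≤ ({x, c}ᶜ : Set V).ncard := by
    refine Set.ncard_le_ncard fun v hv hvxc => ?_
    rcases hvxc with rfl | rfl
    exacts [hxc (G.adj_symm hv), G.irrefl hv]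
  rw [Set.ncard_compl, Set.ncard_pair hcx.symm, h4] at hc_deg
  exact ⟨x, c, hcx.symm, hxc, hx, hc_deg⟩

lemma HasNonadjPairDegLeTwo.of_induce_compl_singleton (hx : G.degN x ≤ 2)
    (hclique : G.IsClique (G.neighborSet x)) (h : (G.induce {x}ᶜ).HasNonadjPairDegLeTwo) :
    G.HasNonadjPairDegLeTwo := by
  obtain ⟨u, v, huv, hnadj, hu, hv⟩ := h
  have key : ∀ w : ({x}ᶜ : Set V), ¬ G.Adj x w → (G.induce {x}ᶜ).degN w ≤ 2 →
      G.HasNonadjPairDegLeTwo := fun w hxw hw =>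
    ⟨x, w, fun h => w.2 h.symm, hxw, hx, by
      rwa [← degN_induce_of_neighborSet_subset w fun v hv hvx => hxw (hvx ▸ hv).symm]⟩
  by_cases hxu : G.Adj x u
  · exact key v (fun hxv => hnadj (hclique hxu hxv (Subtype.coe_ne_coe.mpr huv))) hv
  · exact key u hxu hu

lemma HasNonadjPairDegLeTwo.of_contractEdge [Finite V] (hNx : G.neighborSet x = {a, b})
    (hab : a ≠ b) (hnab : ¬ G.Adj a b) (h : (G.contractEdge x a).HasNonadjPairDegLeTwo) :
    G.HasNonadjPairDegLeTwo := by
  obtain ⟨u, v, huv, hnadj, hu, hv⟩ := h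
  rw [degN_contractEdge_of_neighborSet_eq_pair hNx hab hnab] at hu hv
  exact ⟨u, v, Subtype.coe_ne_coe.mpr huv, fun h => hnadj (contractEdge_adj_of_adj h), hu, hv⟩

lemma exists_nonadj_commonNeighbors_of_contractEdge [Finite V] (hδ : ∀ v, 3 ≤ G.degN v)
    (hxa : G.Adj x a) (h : (G.contractEdge x a).HasNonadjPairDegLeTwo) :
    ∃ w₁ w₂, w₁ ≠ w₂ ∧ ¬ G.Adj w₁ w₂ ∧ w₁ ∈ G.commonNeighbors x a ∧
      w₂ ∈ G.commonNeighbors x a ∧ G.degN w₁ = 3 := by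
  have hax : a ≠ x := (G.ne_of_adj hxa).symm
  have hlow : ∀ w : ({x}ᶜ : Set V), w.1 ≠ a → (G.contractEdge x a).degN w ≤ 2 →
      w.1 ∈ G.commonNeighbors x a ∧ G.degN w = 3 := by
    intro w hwa hw
    have := hδ w
    by_cases hcommon : w.1 ∈ G.commonNeighbors x a
    · have := degN_contractEdge_add_one_of_mem_commonNeighbors hax hcommon
      exact ⟨hcommon, by omega⟩
    · have := degN_contractEdge_of_notMem_commonNeighbors hax hwa hcommon
      omega
  obtain ⟨u, v, huv, hnadj, hu, hv⟩ := h
  have hne : u.1 ≠ v.1 := Subtype.coe_ne_coe.mpr huv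
  have hua : u.1 ≠ a := fun hua =>
    hnadj (contractEdge_adj_of_adj (hua ▸ (hlow v (hua ▸ hne.symm) hv).1.2))
  have hva : v.1 ≠ a := fun hva =>
    hnadj (contractEdge_adj_of_adj (hva ▸ (hlow u (hva ▸ hne) hu).1.2).symm)
  obtain ⟨hu_common, hu_deg⟩ := hlow u hua hu
  exact ⟨u, v, hne, fun h => hnadj (contractEdge_adj_of_adj h), hu_common,
    (hlow v hva hv).1, hu_deg⟩

lemma not_adj_of_forall_adj_exists_nonadj_commonNeighbors [Finite V]
    (h : ∀ p q, G.Adj p q → ∃ w₁ w₂, w₁ ≠ w₂ ∧ ¬ G.Adj w₁ w₂ ∧ w₁ ∈ G.commonNeighbors p q ∧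
      w₂ ∈ G.commonNeighbors p q ∧ G.degN w₁ = 3) {p q : V} : ¬ G.Adj p q := by
  intro hpq
  obtain ⟨w, -, -, -, ⟨hpw, hqw⟩, -, hw⟩ := h p q hpq
  have hfill : ∀ y, G.Adj w y → ∃ r₁ r₂, r₁ ≠ r₂ ∧ ¬ G.Adj r₁ r₂ ∧ G.Adj y r₁ ∧ G.Adj y r₂ ∧
      G.neighborSet w \ {y} = {r₁, r₂} := by
    intro y hwy
    obtain ⟨r₁, r₂, hr, hnr, ⟨hwr₁, hyr₁⟩, ⟨hwr₂, hyr₂⟩, -⟩ := h w y hwy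
    refine ⟨r₁, r₂, hr, hnr, hyr₁, hyr₂, (Set.eq_of_subset_of_ncard_le ?_ ?_).symm⟩
    · exact Set.pair_subset ⟨hwr₁, G.ne_of_adj hyr₁.symm⟩ ⟨hwr₂, G.ne_of_adj hyr₂.symm⟩
    · have := Set.ncard_sdiff_singleton_add_one (show y ∈ G.neighborSet w from hwy)
      rw [Set.ncard_pair hr]
      rw [degN] at hw
      omega
  obtain ⟨r₁, r₂, hr, hnr, -, -, hp⟩ := hfill p hpw.symm
  obtain ⟨s₁, s₂, -, -, hs₁, hs₂, hq⟩ := hfill q hqw.symm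
  -- `q` is one of `r₁, r₂`; the other lies in `N(w) \ {q} = {s₁, s₂}`, so it is adjacent to `q`
  have hq_adj : ∀ t ∈ G.neighborSet w \ {p}, t ≠ q → G.Adj q t := by
    intro t ht htq
    have : t ∈ G.neighborSet w \ {q} := ⟨ht.1, htq⟩
    rw [hq] at this
    rcases this with rfl | rfl
    exacts [hs₁, hs₂]
  have hq_mem : q ∈ G.neighborSet w \ {p} := ⟨hqw.symm, (G.ne_of_adj hpq).symm⟩
  rw [hp] at hq_adj hq_mem
  rcases hq_mem with rfl | rfl
  · exact hnr (hq_adj r₂ (Or.inr rfl) hr.symm)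
  · exact hnr (hq_adj r₁ (Or.inl rfl) hr).symm

theorem hasNonadjPairDegLeTwo_of_not_completeGraph_isMinorOf [Finite V] (G : SimpleGraph V)
    (hV : 4 ≤ Nat.card V) (hK₄ : ¬ (completeGraph (Fin 4)).IsMinorOf G) :
    G.HasNonadjPairDegLeTwo := by
  induction hn : Nat.card V using Nat.strong_induction_on generalizing V with
  | _ n ih =>
  have ih' : 5 ≤ n → ∀ x : V, ∀ G' : SimpleGraph ({x}ᶜ : Set V), G'.IsMinorOf G →
      G'.HasNonadjPairDegLeTwo := by
    intro h5 x G' hG'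
    have hcard : Nat.card ({x}ᶜ : Set V) = n - 1 := by
      rw [Nat.card_coe_set_eq, Set.ncard_compl, Set.ncard_singleton, hn]
    exact ih (n - 1) (by omega) G' (by omega) (fun h => hK₄ (h.trans hG')) hcard
  by_cases hlow : ∃ x, G.degN x ≤ 2
  · obtain ⟨x, hx⟩ := hlow
    obtain h4 | h5 : n = 4 ∨ 5 ≤ n := by omega
    · exact .of_card_eq_four (hn.trans h4) hx
    by_cases hclique : G.IsClique (G.neighborSet x)
    · exact .of_induce_compl_singleton hx hclique (ih' h5 x _ (G.induce_isMinorOf _))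
    · obtain ⟨a, b, hNx, hab, hnab⟩ := exists_neighborSet_eq_pair_of_not_isClique hx hclique
      have hxa : G.Adj x a := by rw [← mem_neighborSet, hNx]; exact Or.inl rfl
      exact .of_contractEdge hNx hab hnab (ih' h5 x _ (contractEdge_isMinorOf hxa))
  · push Not at hlow
    exfalso
    obtain h4 | h5 : n = 4 ∨ 5 ≤ n := by omega
    · refine hK₄ ?_
      have := completeGraph_fin_card_isMinorOf (G := G) fun v => by have := hlow v; omega
      rwa [hn, h4] at this
    · obtain ⟨⟨p⟩, -⟩ := (Nat.card_pos_iff (α := V)).mp (by omega)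
      obtain ⟨q, hpq⟩ : (G.neighborSet p).Nonempty :=
        Set.nonempty_of_ncard_ne_zero (by have := hlow p; rw [degN] at this; omega)
      exact not_adj_of_forall_adj_exists_nonadj_commonNeighbors
        (fun p q hpq => exists_nonadj_commonNeighbors_of_contractEdge hlow hpq
          (ih' h5 p _ (contractEdge_isMinorOf hpq))) hpq

end SimpleGraph

/-- Every finite outerplanar simple graph with at least `4` vertices in
which every vertex has degree at least `2` contains two non-adjacent vertices each of
degree exactly `2`. -/
theorem outerplanar_two_nonadjacent_degree_two {V : Type} [Fintype V]
    (G : SimpleGraph V) (hcard : 4 ≤ Fintype.card V)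
    (hout : G.IsOuterplanar) (hdeg : ∀ v, 2 ≤ G.degN v) :
    ∃ u v, u ≠ v ∧ ¬ G.Adj u v ∧ G.degN u = 2 ∧ G.degN v = 2 := by
  obtain ⟨u, v, huv, hnadj, hu, hv⟩ := G.hasNonadjPairDegLeTwo_of_not_completeGraph_isMinorOf
    (Nat.card_eq_fintype_card (α := V) ▸ hcard) hout.1
  exact ⟨u, v, huv, hnadj, le_antisymm hu (hdeg u), le_antisymm hv (hdeg v)⟩
end
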